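/- Fix real numbers x₁, …, x_n and let 𝔽_n(x) = (1/n) ∑_{i=1}^n 1{x_i ≤ x} denote their empirical CDF. Then, as m → ∞, H_m(𝔽_n)(x) → 𝔽_n(x) for every x ∉ {x₁, …, x_n}, and moreover ‖H_m(𝔽_n) − 𝔽_n‖_p → 0 for every p ∈ [1, ∞). -/

import Mathlib

open MeasureTheory Filter Set
open scoped BoundedContinuousFunction ProbabilityTheory

noncomputable section

/-- Density of the Beta(j, m-j+1) distribution. -/
def betaDens (m j : ℕ) (u : ℝ) : ℝ :=
  (m : ℝ) * ((m - 1).choose (j - 1) : ℝ) * u ^ (j - 1) * (1 - u) ^ (m - j)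

/-- Quantile function (left-continuous generalized inverse). -/
def quantile (G : ℝ → ℝ) (p : ℝ) : ℝ :=
  sInf {x : ℝ | p ≤ G x}

/-- `G` is a cumulative distribution function on ℝ. -/
structure IsCDF (G : ℝ → ℝ) : Prop where
  mono : Monotone G
  rightCont : ∀ x, ContinuousWithinAt G (Ici x) x
  tendsto_atBot : Tendsto G atBot (nhds 0)
  tendsto_atTop : Tendsto G atTop (nhds 1)

/-- `G` has finite mean: its quantile function is integrable on (0,1). -/
def HasFiniteMean (G : ℝ → ℝ) : Prop :=
  IntegrableOn (fun u => quantile G u) (Ioo (0:ℝ) 1)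

/-- Expected j-th order statistic from a sample of size m drawn from G. -/
def muOS (m j : ℕ) (G : ℝ → ℝ) : ℝ :=
  ∫ u in Ioo (0:ℝ) 1, quantile G u * betaDens m j u

/-- The Hoeffding CDF operator `H_m`. -/
def hoeffCDF (m : ℕ) (G : ℝ → ℝ) (x : ℝ) : ℝ :=
  (m : ℝ)⁻¹ * ∑ j ∈ Finset.Icc 1 m, if muOS m j G ≤ x then (1:ℝ) else 0

/-- The quantile-Hoeffding operator `I_m`. -/
def quantHoeff (m : ℕ) (h : ℝ → ℝ) (u : ℝ) : ℝ :=
  ∑ j ∈ Finset.Icc 1 m,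
    (∫ t in Ioo (0:ℝ) 1, h t * betaDens m j t) *
      (if u ∈ Ioc (((j : ℝ) - 1) / m) ((j : ℝ) / m) then (1:ℝ) else 0)

/-- Empirical CDF of the reals `x 0, ..., x (n-1)`. -/
def ecdf (n : ℕ) (x : ℕ → ℝ) (t : ℝ) : ℝ :=
  (n : ℝ)⁻¹ * ∑ i ∈ Finset.range n, if x i ≤ t then (1:ℝ) else 0

/-- Empirical CDF of the random sample `X 0, ..., X (n-1)`. -/
def empCDF {Ω : Type*} (X : ℕ → Ω → ℝ) (n : ℕ) (ω : Ω) : ℝ → ℝ :=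
  fun t => (n : ℝ)⁻¹ * ∑ i ∈ Finset.range n, if X i ω ≤ t then (1:ℝ) else 0

/-!
The quantile function `q` of a CDF `G` satisfies `q u ≤ s ↔ u ≤ G s` for `u ∈ (0, 1)`. If `t`
is not a sample point, `𝔽_n` is constant on some `[t - δ, t + δ]`, so `q - t ≤ -δ` on
`(0, 𝔽_n t]` and `q - t ≥ δ` on `(𝔽_n t, 1)`. The Beta(j, m-j+1) law has mean `j/(m+1)` and
variance at most `1/m`, so by Chebyshev `μ_{j:m} - t = ∫ (q - t) f_{B_{j:m}}` has the sign of
`j/(m+1) - 𝔽_n t` once this gap exceeds a fixed `ε` and `m` is large; counting the ranks `j` on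
each side gives `H_m(𝔽_n)(t) → 𝔽_n(t)`. Both CDFs vanish left of all `x_i` and equal `1` right
of them, so the `L^p` statement follows by dominated convergence.
-/

open scoped Nat Finset Topology

lemma integral_pow_mul_one_sub_pow (a b : ℕ) :
    ∫ u in (0:ℝ)..1, u ^ a * (1 - u) ^ b = a ! * b ! / (a + b + 1)! := by
  induction b generalizing a with
  | zero =>
    simp only [pow_zero, mul_one, integral_pow, one_pow, ne_eq, add_eq_zero, one_ne_zero, and_false,
      not_false_eq_true, zero_pow, sub_zero, Nat.factorial_zero, Nat.cast_one, add_zero]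
    push_cast [Nat.factorial_succ]
    field_simp
  | succ b ih =>
    have hsplit : ∀ u : ℝ,
        u ^ a * (1 - u) ^ (b + 1) = u ^ a * (1 - u) ^ b - u ^ (a + 1) * (1 - u) ^ b :=
      fun u => by ring
    simp_rw [hsplit]
    rw [intervalIntegral.integral_sub (by apply Continuous.intervalIntegrable; fun_prop)
      (by apply Continuous.intervalIntegrable; fun_prop), ih, ih,
      show a + 1 + b + 1 = a + b + 1 + 1 by ring, show a + (b + 1) + 1 = a + b + 1 + 1 by ring]
    push_cast [Nat.factorial_succ]
    field_simp
    ring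

lemma betaDens_add_add_one (a b : ℕ) (u : ℝ) :
    betaDens (a + b + 1) (a + 1) u
      = (a + b + 1 : ℕ) * (a + b).choose a * (u ^ a * (1 - u) ^ b) := by
  simp only [betaDens, Nat.add_sub_cancel, show a + b + 1 - (a + 1) = b by omega]
  ring

lemma integral_pow_mul_betaDens (a b k : ℕ) :
    ∫ u in Ioo (0:ℝ) 1, u ^ k * betaDens (a + b + 1) (a + 1) u
      = (a + 1).ascFactorial k / (a + b + 2).ascFactorial k := by
  have hpoly : ∀ u : ℝ, u ^ k * betaDens (a + b + 1) (a + 1) u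
      = (a + b + 1 : ℕ) * (a + b).choose a * (u ^ (a + k) * (1 - u) ^ b) := fun u => by
    rw [betaDens_add_add_one]; ring
  simp_rw [hpoly]
  rw [integral_const_mul, ← integral_Ioc_eq_integral_Ioo,
    ← intervalIntegral.integral_of_le zero_le_one, integral_pow_mul_one_sub_pow]
  have hchoose := Nat.add_choose_mul_factorial_mul_factorial b a
  have hnum := Nat.factorial_mul_ascFactorial a k
  have hden := Nat.factorial_mul_ascFactorial (a + b + 1) k
  rw [add_comm b a] at hchoose
  rw [show a + k + b + 1 = a + b + 1 + k by ring, ← hnum, ← hden, Nat.factorial_succ (a + b),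
    ← hchoose]
  push_cast
  have : ((a + b + 2).ascFactorial k : ℝ) ≠ 0 := by positivity
  have : ((a + b).choose a : ℝ) ≠ 0 := Nat.cast_ne_zero.2 (Nat.choose_pos (by omega)).ne'
  field_simp

lemma continuous_betaDens (m j : ℕ) : Continuous (betaDens m j) := by
  unfold betaDens; fun_prop

lemma betaDens_nonneg (m j : ℕ) {u : ℝ} (hu : u ∈ Ioo (0:ℝ) 1) : 0 ≤ betaDens m j u := by
  have hu0 : 0 < u := hu.1
  have hu1 : 0 < 1 - u := sub_pos.2 hu.2
  unfold betaDens
  positivity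

lemma Continuous.integrableOn_Ioo {f : ℝ → ℝ} (hf : Continuous f) {a b : ℝ} :
    IntegrableOn f (Ioo a b) :=
  hf.integrableOn_Icc.mono_set Ioo_subset_Icc_self

lemma integral_betaDens {m j : ℕ} (hj : 1 ≤ j) (hjm : j ≤ m) :
    ∫ u in Ioo (0:ℝ) 1, betaDens m j u = 1 := by
  obtain ⟨a, b, rfl, rfl⟩ : ∃ a b, j = a + 1 ∧ m = a + b + 1 := ⟨j - 1, m - j, by omega, by omega⟩
  simpa using integral_pow_mul_betaDens a b 0

lemma integral_sq_sub_mul_betaDens_le {m j : ℕ} (hj : 1 ≤ j) (hjm : j ≤ m) :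
    ∫ u in Ioo (0:ℝ) 1, (u - (j : ℝ) / (m + 1)) ^ 2 * betaDens m j u ≤ 1 / (m : ℝ) := by
  obtain ⟨a, b, rfl, rfl⟩ : ∃ a b, j = a + 1 ∧ m = a + b + 1 := ⟨j - 1, m - j, by omega, by omega⟩
  set f := betaDens (a + b + 1) (a + 1)
  set c : ℝ := ((a + 1 : ℕ) : ℝ) / ((a + b + 1 : ℕ) + 1)
  have hint : ∀ k : ℕ, IntegrableOn (fun u => u ^ k * f u) (Ioo (0:ℝ) 1) := fun k =>
    Continuous.integrableOn_Ioo (by have := continuous_betaDens (a + b + 1) (a + 1); fun_prop)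
  have hexpand : ∀ u : ℝ,
      (u - c) ^ 2 * f u = u ^ 2 * f u - 2 * c * (u ^ 1 * f u) + c ^ 2 * (u ^ 0 * f u) :=
    fun u => by ring
  simp_rw [hexpand]
  rw [integral_add ((hint 2).sub' ((hint 1).const_mul _)) ((hint 0).const_mul _),
    integral_sub (hint 2) ((hint 1).const_mul _), integral_const_mul, integral_const_mul]
  simp only [f, integral_pow_mul_betaDens, c, Nat.ascFactorial_succ, Nat.ascFactorial_zero]
  push_cast
  calc _ = ((a : ℝ) + 1) * (b + 1) / ((a + b + 2) ^ 2 * (a + b + 3)) := by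
        field_simp
        ring
    _ ≤ 1 / ((a : ℝ) + b + 1) := by
        rw [div_le_div_iff₀ (by positivity) (by positivity)]
        have ha : (0 : ℝ) ≤ a := a.cast_nonneg
        have hb : (0 : ℝ) ≤ b := b.cast_nonneg
        have hab : ((a : ℝ) + 1) * (b + 1) ≤ (a + b + 2) ^ 2 := by nlinarith
        nlinarith [mul_le_mul hab (by linarith : (a : ℝ) + b + 1 ≤ a + b + 3) (by positivity)
          (by positivity)]

lemma setIntegral_betaDens_le {m j : ℕ} (hj : 1 ≤ j) (hjm : j ≤ m) {ε : ℝ} (hε : 0 < ε)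
    {S : Set ℝ} (hS : MeasurableSet S) (hSsub : S ⊆ Ioo 0 1)
    (hfar : ∀ u ∈ S, ε ≤ |u - (j : ℝ) / (m + 1)|) :
    ∫ u in S, betaDens m j u ≤ 1 / (ε ^ 2 * m) := by
  set f := betaDens m j
  set c : ℝ := (j : ℝ) / (m + 1)
  have hw : IntegrableOn (fun u => (ε ^ 2)⁻¹ * ((u - c) ^ 2 * f u)) (Ioo (0:ℝ) 1) :=
    Continuous.integrableOn_Ioo (by have := continuous_betaDens m j; fun_prop)
  calc ∫ u in S, f u
      ≤ ∫ u in S, (ε ^ 2)⁻¹ * ((u - c) ^ 2 * f u) := by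
        refine setIntegral_mono_on ((continuous_betaDens m j).integrableOn_Ioo.mono_set hSsub)
          (hw.mono_set hSsub) hS fun u hu => ?_
        have hsq : ε ^ 2 ≤ (u - c) ^ 2 := by
          simpa only [sq_abs] using pow_le_pow_left₀ hε.le (hfar u hu) 2
        have hone : 1 ≤ (ε ^ 2)⁻¹ * (u - c) ^ 2 := by
          rw [← div_eq_inv_mul, one_le_div (by positivity)]
          exact hsq
        nlinarith [betaDens_nonneg m j (hSsub hu)]
    _ ≤ ∫ u in Ioo (0:ℝ) 1, (ε ^ 2)⁻¹ * ((u - c) ^ 2 * f u) := by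
        refine setIntegral_mono_set hw ?_ (Eventually.of_forall hSsub)
        filter_upwards [ae_restrict_mem measurableSet_Ioo] with u hu
        have := betaDens_nonneg m j hu
        positivity
    _ ≤ (ε ^ 2)⁻¹ * (1 / m) := by
        rw [integral_const_mul]
        gcongr
        exact integral_sq_sub_mul_betaDens_le hj hjm
    _ = 1 / (ε ^ 2 * m) := by ring

lemma setIntegral_mul_neg_of_le {α : Type*} [MeasurableSpace α] {μ : Measure α} {s A : Set α}
    {f g : α → ℝ} {δ M : ℝ} (hs : MeasurableSet s) (hA : MeasurableSet A)
    (hf0 : ∀ x ∈ s, 0 ≤ f x) (hf : IntegrableOn f s μ) (hf1 : ∫ x in s, f x ∂μ = 1)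
    (hgf : IntegrableOn (fun x => g x * f x) s μ) (hgM : ∀ x ∈ s, g x ≤ M)
    (hgδ : ∀ x ∈ s ∩ A, g x ≤ -δ) (htail : (δ + M) * ∫ x in s \ A, f x ∂μ < δ) :
    ∫ x in s, g x * f x ∂μ < 0 := by
  have hind : IntegrableOn (Aᶜ.indicator f) s μ := hf.indicator hA.compl
  have hle : ∫ x in s, g x * f x ∂μ ≤ ∫ x in s, (-δ * f x + (δ + M) * Aᶜ.indicator f x) ∂μ := by
    refine setIntegral_mono_on hgf ((hf.const_mul _).add (hind.const_mul _)) hs fun x hx => ?_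
    by_cases hxA : x ∈ A
    · rw [indicator_of_notMem (notMem_compl_iff.2 hxA), mul_zero, add_zero]
      exact mul_le_mul_of_nonneg_right (hgδ x ⟨hx, hxA⟩) (hf0 x hx)
    · rw [indicator_of_mem (mem_compl hxA)]
      nlinarith [mul_le_mul_of_nonneg_right (hgM x hx) (hf0 x hx)]
  rw [integral_add (hf.const_mul _) (hind.const_mul _), integral_const_mul, integral_const_mul,
    setIntegral_indicator hA.compl, hf1, ← sdiff_eq] at hle
  linarith

namespace IsCDF

variable {G : ℝ → ℝ}

lemma nonneg (hG : IsCDF G) (t : ℝ) : 0 ≤ G t := hG.mono.le_of_tendsto hG.tendsto_atBot t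

lemma le_one (hG : IsCDF G) (t : ℝ) : G t ≤ 1 := hG.mono.ge_of_tendsto hG.tendsto_atTop t

lemma bddBelow_setOf_le (hG : IsCDF G) {u : ℝ} (hu : 0 < u) : BddBelow {s | u ≤ G s} := by
  obtain ⟨s₀, hs₀⟩ := eventually_atBot.1 (hG.tendsto_atBot.eventually (gt_mem_nhds hu))
  exact ⟨s₀, fun s hs => le_of_not_ge fun h => (hs₀ s h).not_ge hs⟩

lemma nonempty_setOf_le (hG : IsCDF G) {u : ℝ} (hu : u < 1) : {s | u ≤ G s}.Nonempty :=
  let ⟨s, hs⟩ := (hG.tendsto_atTop.eventually (lt_mem_nhds hu)).exists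
  ⟨s, hs.le⟩

lemma quantile_le_iff (hG : IsCDF G) {u : ℝ} (hu : u ∈ Ioo 0 1) {s : ℝ} :
    quantile G u ≤ s ↔ u ≤ G s := by
  refine ⟨fun h => le_trans ?_ (hG.mono h), fun h => csInf_le (hG.bddBelow_setOf_le hu.1) h⟩
  have hright : ∀ r ∈ Ioi (quantile G u), u ≤ G r := fun r hr => by
    obtain ⟨r', hr', hr'r⟩ := exists_lt_of_csInf_lt (hG.nonempty_setOf_le hu.2) hr
    exact hr'.trans (hG.mono hr'r.le)
  exact ge_of_tendsto ((hG.rightCont _).mono Ioi_subset_Ici_self)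
    (eventually_nhdsWithin_of_forall hright)

lemma monotoneOn_quantile (hG : IsCDF G) : MonotoneOn (quantile G) (Ioo 0 1) :=
  fun _ hu _ hv huv => (hG.quantile_le_iff hu).2 (huv.trans ((hG.quantile_le_iff hv).1 le_rfl))

lemma quantile_mem_Ioc (hG : IsCDF G) {a b : ℝ} (ha : G a = 0) (hb : G b = 1) {u : ℝ}
    (hu : u ∈ Ioo 0 1) : quantile G u ∈ Ioc a b :=
  ⟨lt_of_not_ge fun h => ((hG.quantile_le_iff hu).1 h).not_gt (ha ▸ hu.1),
    (hG.quantile_le_iff hu).2 (hb ▸ hu.2.le)⟩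

lemma abs_quantile_le (hG : IsCDF G) {a b : ℝ} (ha : G a = 0) (hb : G b = 1) {u : ℝ}
    (hu : u ∈ Ioo 0 1) : |quantile G u| ≤ |a| + |b| := by
  obtain ⟨hau, hub⟩ := hG.quantile_mem_Ioc ha hb hu
  rw [abs_le]
  constructor <;> linarith [neg_abs_le a, le_abs_self b, abs_nonneg a, abs_nonneg b]

lemma hasFiniteMean (hG : IsCDF G) {a b : ℝ} (ha : G a = 0) (hb : G b = 1) : HasFiniteMean G :=
  Integrable.of_bound
    (aemeasurable_restrict_of_monotoneOn measurableSet_Ioo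
      hG.monotoneOn_quantile).aestronglyMeasurable
    (|a| + |b|) ((ae_restrict_iff' measurableSet_Ioo).2 (Eventually.of_forall
      fun _ hu => hG.abs_quantile_le ha hb hu))

end IsCDF

section OrderStatistics

variable {G : ℝ → ℝ} {m j : ℕ}

lemma HasFiniteMean.integrableOn_mul_betaDens (hG : HasFiniteMean G) (m j : ℕ) :
    IntegrableOn (fun u => quantile G u * betaDens m j u) (Ioo 0 1) := by
  have hIcc : IntegrableOn (quantile G) (Icc 0 1) := by
    rwa [integrableOn_Icc_iff_integrableOn_Ioo]
  exact (hIcc.mul_continuousOn (continuous_betaDens m j).continuousOn isCompact_Icc).mono_set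
    Ioo_subset_Icc_self

lemma HasFiniteMean.integrableOn_sub_mul_betaDens (hG : HasFiniteMean G) (m j : ℕ) (t : ℝ) :
    IntegrableOn (fun u => (quantile G u - t) * betaDens m j u) (Ioo 0 1) := by
  simp_rw [sub_mul]
  exact (hG.integrableOn_mul_betaDens m j).sub'
    ((continuous_betaDens m j).integrableOn_Ioo.const_mul t)

lemma muOS_sub_eq_setIntegral (hG : HasFiniteMean G) (hj : 1 ≤ j) (hjm : j ≤ m) (t : ℝ) :
    muOS m j G - t = ∫ u in Ioo (0:ℝ) 1, (quantile G u - t) * betaDens m j u := by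
  simp_rw [sub_mul]
  rw [integral_sub (hG.integrableOn_mul_betaDens m j)
    ((continuous_betaDens m j).integrableOn_Ioo.const_mul t), integral_const_mul,
    integral_betaDens hj hjm, mul_one, muOS]

lemma muOS_lt_of_quantile_le (hG : HasFiniteMean G) (hj : 1 ≤ j) (hjm : j ≤ m)
    {t c δ ε M : ℝ} (hδ : 0 < δ) (hε : 0 < ε) (hM : ∀ u ∈ Ioo (0:ℝ) 1, |quantile G u - t| ≤ M)
    (hc : ∀ u ∈ Ioo (0:ℝ) 1, u ≤ c → quantile G u ≤ t - δ) (hjc : (j : ℝ) / (m + 1) ≤ c - ε)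
    (hm : δ + M < δ * ε ^ 2 * m) :
    muOS m j G < t := by
  have hM0 : 0 ≤ M := (abs_nonneg _).trans (hM (1 / 2) ⟨by norm_num, by norm_num⟩)
  have hm0 : (0:ℝ) < m := by exact_mod_cast (by omega : 0 < m)
  have htail : ∫ u in Ioo 0 1 \ Iic c, betaDens m j u ≤ 1 / (ε ^ 2 * m) :=
    setIntegral_betaDens_le hj hjm hε (measurableSet_Ioo.diff measurableSet_Iic) sdiff_subset
      fun u hu => le_abs.2 (Or.inl (by linarith [notMem_Iic.1 hu.2]))
  rw [← sub_neg, muOS_sub_eq_setIntegral hG hj hjm]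
  refine setIntegral_mul_neg_of_le (δ := δ) measurableSet_Ioo measurableSet_Iic
    (fun u hu => betaDens_nonneg m j hu) (continuous_betaDens m j).integrableOn_Ioo
    (integral_betaDens hj hjm) (hG.integrableOn_sub_mul_betaDens m j t)
    (fun u hu => (le_abs_self _).trans (hM u hu)) (fun u hu => by linarith [hc u hu.1 hu.2]) ?_
  calc (δ + M) * ∫ u in Ioo 0 1 \ Iic c, betaDens m j u ≤ (δ + M) * (1 / (ε ^ 2 * m)) := by
        gcongr
    _ < δ := by
        rw [mul_one_div, div_lt_iff₀ (by positivity)]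
        linarith

lemma lt_muOS_of_le_quantile (hG : HasFiniteMean G) (hj : 1 ≤ j) (hjm : j ≤ m)
    {t c δ ε M : ℝ} (hδ : 0 < δ) (hε : 0 < ε) (hM : ∀ u ∈ Ioo (0:ℝ) 1, |quantile G u - t| ≤ M)
    (hc : ∀ u ∈ Ioo (0:ℝ) 1, c < u → t + δ ≤ quantile G u) (hjc : c + ε ≤ (j : ℝ) / (m + 1))
    (hm : δ + M < δ * ε ^ 2 * m) :
    t < muOS m j G := by
  have hM0 : 0 ≤ M := (abs_nonneg _).trans (hM (1 / 2) ⟨by norm_num, by norm_num⟩)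
  have hm0 : (0:ℝ) < m := by exact_mod_cast (by omega : 0 < m)
  have htail : ∫ u in Ioo 0 1 \ Ioi c, betaDens m j u ≤ 1 / (ε ^ 2 * m) :=
    setIntegral_betaDens_le hj hjm hε (measurableSet_Ioo.diff measurableSet_Ioi) sdiff_subset
      fun u hu => le_abs.2 (Or.inr (by linarith [notMem_Ioi.1 hu.2]))
  have hneg : ∫ u in Ioo (0:ℝ) 1, (t - quantile G u) * betaDens m j u < 0 := by
    refine setIntegral_mul_neg_of_le (δ := δ) measurableSet_Ioo measurableSet_Ioi
      (fun u hu => betaDens_nonneg m j hu) (continuous_betaDens m j).integrableOn_Ioo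
      (integral_betaDens hj hjm) ((hG.integrableOn_sub_mul_betaDens m j t).neg.congr_fun
        (fun u _ => by simp only [Pi.neg_apply]; ring) measurableSet_Ioo)
      (fun u hu => (le_abs_self _).trans ((abs_sub_comm _ _).trans_le (hM u hu)))
      (fun u hu => by linarith [hc u hu.1 hu.2]) ?_
    calc (δ + M) * ∫ u in Ioo 0 1 \ Ioi c, betaDens m j u ≤ (δ + M) * (1 / (ε ^ 2 * m)) := by
          gcongr
      _ < δ := by
          rw [mul_one_div, div_lt_iff₀ (by positivity)]
          linarith
  have hflip : ∫ u in Ioo (0:ℝ) 1, (t - quantile G u) * betaDens m j u = -(muOS m j G - t) := by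
    rw [muOS_sub_eq_setIntegral hG hj hjm, ← integral_neg]
    congr 1
    ext u
    ring
  linarith

lemma muOS_mem_Icc (hG : HasFiniteMean G) (hj : 1 ≤ j) (hjm : j ≤ m) {a b : ℝ}
    (hq : ∀ u ∈ Ioo (0:ℝ) 1, quantile G u ∈ Icc a b) : muOS m j G ∈ Icc a b := by
  have hlo := muOS_sub_eq_setIntegral hG hj hjm a
  have hhi := muOS_sub_eq_setIntegral hG hj hjm b
  constructor
  · refine sub_nonneg.1 (hlo ▸ setIntegral_nonneg measurableSet_Ioo fun u hu => ?_)
    exact mul_nonneg (sub_nonneg.2 (hq u hu).1) (betaDens_nonneg m j hu)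
  · refine sub_nonpos.1 (hhi ▸ setIntegral_nonpos measurableSet_Ioo fun u hu => ?_)
    exact mul_nonpos_of_nonpos_of_nonneg (sub_nonpos.2 (hq u hu).2) (betaDens_nonneg m j hu)

end OrderStatistics

section HoeffdingCDF

variable {G : ℝ → ℝ} {m : ℕ} {t : ℝ}

lemma hoeffCDF_eq_card (m : ℕ) (G : ℝ → ℝ) (t : ℝ) :
    hoeffCDF m G t = #{j ∈ Finset.Icc 1 m | muOS m j G ≤ t} / m := by
  rw [hoeffCDF, Finset.sum_boole, inv_mul_eq_div]

lemma hoeffCDF_nonneg (m : ℕ) (G : ℝ → ℝ) (t : ℝ) : 0 ≤ hoeffCDF m G t := by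
  rw [hoeffCDF_eq_card]
  positivity

lemma hoeffCDF_le_one (m : ℕ) (G : ℝ → ℝ) (t : ℝ) : hoeffCDF m G t ≤ 1 := by
  rw [hoeffCDF_eq_card]
  refine div_le_one_of_le₀ ?_ m.cast_nonneg
  exact_mod_cast (Finset.card_filter_le _ _).trans (Nat.card_Icc 1 m).le

lemma monotone_hoeffCDF (m : ℕ) (G : ℝ → ℝ) : Monotone (hoeffCDF m G) := fun s t hst => by
  simp only [hoeffCDF_eq_card]
  gcongr

lemma hoeffCDF_eq_zero (h : ∀ j ∈ Finset.Icc 1 m, t < muOS m j G) : hoeffCDF m G t = 0 := by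
  rw [hoeffCDF_eq_card, Finset.filter_false_of_mem fun j hj => not_le.2 (h j hj), Finset.card_empty,
    Nat.cast_zero, zero_div]

lemma hoeffCDF_eq_one (hm : m ≠ 0) (h : ∀ j ∈ Finset.Icc 1 m, muOS m j G ≤ t) :
    hoeffCDF m G t = 1 := by
  rw [hoeffCDF_eq_card, Finset.filter_true_of_mem h, Nat.card_Icc, Nat.add_sub_cancel]
  exact div_self (Nat.cast_ne_zero.2 hm)

lemma eventually_const_lt_mul_natCast {a c : ℝ} (ha : 0 < a) : ∀ᶠ m : ℕ in atTop, c < a * m :=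
  (tendsto_natCast_atTop_atTop.const_mul_atTop ha).eventually_gt_atTop c

lemma eventually_lt_hoeffCDF {d a : ℝ} (had : a < d) (ha1 : a < 1)
    (h : ∀ᶠ m : ℕ in atTop, ∀ j ∈ Finset.Icc 1 m, (j : ℝ) / (m + 1) ≤ d → muOS m j G ≤ t) :
    ∀ᶠ m : ℕ in atTop, a < hoeffCDF m G t := by
  filter_upwards [h, eventually_const_lt_mul_natCast (c := 1 - d) (sub_pos.2 had),
    eventually_ge_atTop 1] with m hm hlarge hm1
  have hm0 : (0:ℝ) < m := by exact_mod_cast hm1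
  set k := min m ⌊d * (m + 1)⌋₊
  have hsub : Finset.Icc 1 k ⊆ {j ∈ Finset.Icc 1 m | muOS m j G ≤ t} := fun j hj => by
    obtain ⟨hj1, hjk⟩ := Finset.mem_Icc.1 hj
    have hjm : j ≤ m := hjk.trans (min_le_left _ _)
    have hjd : (j : ℝ) ≤ d * (m + 1) :=
      (Nat.le_floor_iff' (by omega)).1 (hjk.trans (min_le_right _ _))
    refine Finset.mem_filter.2 ⟨Finset.mem_Icc.2 ⟨hj1, hjm⟩, hm j (Finset.mem_Icc.2 ⟨hj1, hjm⟩) ?_⟩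
    rwa [div_le_iff₀ (by positivity)]
  have hk : a * m < k := by
    rw [Nat.cast_min, lt_min_iff]
    refine ⟨by nlinarith, ?_⟩
    linarith [Nat.sub_one_lt_floor (d * (m + 1))]
  rw [hoeffCDF_eq_card, lt_div_iff₀ hm0]
  calc a * m < k := hk
    _ = #(Finset.Icc 1 k) := by simp
    _ ≤ _ := by exact_mod_cast Finset.card_le_card hsub

lemma eventually_hoeffCDF_lt {d b : ℝ} (hd : 0 ≤ d) (hdb : d < b)
    (h : ∀ᶠ m : ℕ in atTop, ∀ j ∈ Finset.Icc 1 m, d ≤ (j : ℝ) / (m + 1) → t < muOS m j G) :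
    ∀ᶠ m : ℕ in atTop, hoeffCDF m G t < b := by
  filter_upwards [h, eventually_const_lt_mul_natCast (c := d) (sub_pos.2 hdb),
    eventually_ge_atTop 1] with m hm hlarge hm1
  have hm0 : (0:ℝ) < m := by exact_mod_cast hm1
  have hsub : {j ∈ Finset.Icc 1 m | muOS m j G ≤ t} ⊆ Finset.Icc 1 ⌊d * (m + 1)⌋₊ := fun j hj => by
    obtain ⟨hj, hjt⟩ := Finset.mem_filter.1 hj
    have hjd : (j : ℝ) / (m + 1) < d := lt_of_not_ge fun hdj => (hm j hj hdj).not_ge hjt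
    rw [div_lt_iff₀ (by positivity)] at hjd
    exact Finset.mem_Icc.2 ⟨(Finset.mem_Icc.1 hj).1, Nat.le_floor hjd.le⟩
  rw [hoeffCDF_eq_card, div_lt_iff₀ hm0]
  calc (#{j ∈ Finset.Icc 1 m | muOS m j G ≤ t} : ℝ) ≤ #(Finset.Icc 1 ⌊d * (m + 1)⌋₊) := by
        exact_mod_cast Finset.card_le_card hsub
    _ = ⌊d * (m + 1)⌋₊ := by simp
    _ ≤ d * (m + 1) := Nat.floor_le (by positivity)
    _ < b * m := by linarith

lemma tendsto_hoeffCDF_of_eventually_muOS {c : ℝ} (hc0 : 0 ≤ c) (hc1 : c ≤ 1)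
    (h : ∀ ε > 0, ∀ᶠ m : ℕ in atTop, ∀ j ∈ Finset.Icc 1 m,
      ((j : ℝ) / (m + 1) ≤ c - ε → muOS m j G ≤ t) ∧ (c + ε ≤ (j : ℝ) / (m + 1) → t < muOS m j G)) :
    Tendsto (fun m => hoeffCDF m G t) atTop (𝓝 c) := by
  refine tendsto_order.2 ⟨fun a ha => ?_, fun b hb => ?_⟩
  · refine eventually_lt_hoeffCDF (d := c - (c - a) / 2) (by linarith) (by linarith) ?_
    exact (h _ (by linarith)).mono fun m hm j hj => (hm j hj).1
  · refine eventually_hoeffCDF_lt (d := c + (b - c) / 2) (by linarith) (by linarith) ?_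
    exact (h _ (by linarith)).mono fun m hm j hj => (hm j hj).2

end HoeffdingCDF

namespace IsCDF

variable {G : ℝ → ℝ} {a b : ℝ}

lemma tendsto_hoeffCDF_of_apply_sub_eq_apply_add (hG : IsCDF G) (ha : G a = 0) (hb : G b = 1)
    {t δ : ℝ} (hδ : 0 < δ) (hflat : G (t - δ) = G (t + δ)) :
    Tendsto (fun m => hoeffCDF m G t) atTop (𝓝 (G t)) := by
  have hmean := hG.hasFiniteMean ha hb
  have hleft : G (t - δ) = G t :=
    le_antisymm (hG.mono (by linarith)) (hflat ▸ hG.mono (by linarith))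
  have hM : ∀ u ∈ Ioo (0:ℝ) 1, |quantile G u - t| ≤ |a| + |b| + |t| := fun u hu =>
    (abs_sub _ _).trans (by linarith [hG.abs_quantile_le ha hb hu])
  have hbelow : ∀ u ∈ Ioo (0:ℝ) 1, u ≤ G t → quantile G u ≤ t - δ := fun u hu h =>
    (hG.quantile_le_iff hu).2 (hleft ▸ h)
  have habove : ∀ u ∈ Ioo (0:ℝ) 1, G t < u → t + δ ≤ quantile G u := fun u hu h =>
    le_of_not_gt fun h' => ((hG.quantile_le_iff hu).1 h'.le).not_gt (hflat ▸ hleft ▸ h)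
  refine tendsto_hoeffCDF_of_eventually_muOS (hG.nonneg t) (hG.le_one t) fun ε hε => ?_
  filter_upwards [eventually_const_lt_mul_natCast (c := δ + (|a| + |b| + |t|))
    (by positivity : 0 < δ * ε ^ 2)] with m hm j hj
  obtain ⟨hj1, hjm⟩ := Finset.mem_Icc.1 hj
  exact ⟨fun hjc => (muOS_lt_of_quantile_le hmean hj1 hjm hδ hε hM hbelow hjc hm).le,
    fun hjc => lt_muOS_of_le_quantile hmean hj1 hjm hδ hε hM habove hjc hm⟩

lemma hoeffCDF_eq_of_notMem_Icc (hG : IsCDF G) (ha : G a = 0) (hb : G b = 1) {m : ℕ}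
    (hm : m ≠ 0) {t : ℝ} (ht : t ∉ Icc a b) : hoeffCDF m G t = G t := by
  have hμ : ∀ j ∈ Finset.Icc 1 m, muOS m j G ∈ Icc a b := fun j hj =>
    muOS_mem_Icc (hG.hasFiniteMean ha hb) (Finset.mem_Icc.1 hj).1 (Finset.mem_Icc.1 hj).2
      fun u hu => Ioc_subset_Icc_self (hG.quantile_mem_Ioc ha hb hu)
  rcases not_and_or.1 ht with hat | htb
  · rw [not_le] at hat
    rw [hoeffCDF_eq_zero fun j hj => hat.trans_le (hμ j hj).1]
    exact (le_antisymm (ha ▸ hG.mono hat.le) (hG.nonneg t)).symm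
  · rw [not_le] at htb
    rw [hoeffCDF_eq_one hm fun j hj => (hμ j hj).2.trans htb.le]
    exact (le_antisymm (hG.le_one t) (hb ▸ hG.mono htb.le)).symm

lemma tendsto_integral_abs_hoeffCDF_sub_rpow (hG : IsCDF G) (ha : G a = 0) (hb : G b = 1)
    {p : ℝ} (hp : 0 < p)
    (hlim : ∀ᵐ t, Tendsto (fun m => hoeffCDF m G t) atTop (𝓝 (G t))) :
    Tendsto (fun m => ∫ t, |hoeffCDF m G t - G t| ^ p) atTop (𝓝 0) := by
  have hmeas : ∀ m, AEStronglyMeasurable (fun t => |hoeffCDF m G t - G t| ^ p) := fun m =>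
    ((monotone_hoeffCDF m G).measurable.sub hG.mono.measurable).abs.pow_const p
      |>.aestronglyMeasurable
  have hbound : ∀ m ≠ 0, ∀ t, ‖|hoeffCDF m G t - G t| ^ p‖ ≤ (Icc a b).indicator 1 t := by
    intro m hm t
    rw [Real.norm_of_nonneg (by positivity)]
    by_cases ht : t ∈ Icc a b
    · rw [indicator_of_mem ht, Pi.one_apply]
      exact Real.rpow_le_one (abs_nonneg _) (abs_sub_le_of_nonneg_of_le (hoeffCDF_nonneg m G t)
        (hoeffCDF_le_one m G t) (hG.nonneg t) (hG.le_one t)) hp.le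
    · rw [indicator_of_notMem ht, hG.hoeffCDF_eq_of_notMem_Icc ha hb hm ht, sub_self, abs_zero,
        Real.zero_rpow hp.ne']
  have hlim' : ∀ᵐ t, Tendsto (fun m => |hoeffCDF m G t - G t| ^ p) atTop (𝓝 0) :=
    hlim.mono fun t ht => by
      simpa [Real.zero_rpow hp.ne'] using ((ht.sub_const (G t)).abs.rpow_const (Or.inr hp.le))
  simpa using tendsto_integral_filter_of_dominated_convergence _ (Eventually.of_forall hmeas)
    ((eventually_ne_atTop 0).mono fun m hm => Eventually.of_forall (hbound m hm))
    ((integrableOn_const measure_Icc_lt_top.ne).integrable_indicator measurableSet_Icc) hlim'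

end IsCDF

lemma Set.Finite.exists_pos_forall_notMem_Icc {T : Set ℝ} (hT : T.Finite) {s : ℝ} (hs : s ∉ T) :
    ∃ δ > 0, ∀ y ∈ T, y ∉ Icc (s - δ) (s + δ) := by
  obtain ⟨δ, hδ, hsub⟩ :=
    Metric.nhds_basis_closedBall.mem_iff.1 (hT.isClosed.isOpen_compl.mem_nhds hs)
  exact ⟨δ, hδ, fun y hy hyI => hsub (Real.closedBall_eq_Icc ▸ hyI) hy⟩

section EmpiricalCDF

variable {n : ℕ} {x : ℕ → ℝ}

lemma ecdf_eq_zero {t : ℝ} (h : ∀ i < n, t < x i) : ecdf n x t = 0 := by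
  rw [ecdf, Finset.sum_eq_zero fun i hi => if_neg (not_le.2 (h i (Finset.mem_range.1 hi))),
    mul_zero]

lemma ecdf_eq_one (hn : 0 < n) {t : ℝ} (h : ∀ i < n, x i ≤ t) : ecdf n x t = 1 := by
  rw [ecdf, Finset.sum_congr rfl fun i hi => if_pos (h i (Finset.mem_range.1 hi))]
  simp [hn.ne']

lemma ecdf_eq_of_forall_notMem_Ioc {s t : ℝ} (hst : s ≤ t) (h : ∀ i < n, x i ∉ Ioc s t) :
    ecdf n x s = ecdf n x t := by
  unfold ecdf
  congr 1
  refine Finset.sum_congr rfl fun i hi => if_congr ?_ rfl rfl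
  have := h i (Finset.mem_range.1 hi)
  rw [mem_Ioc, not_and, not_le] at this
  exact ⟨fun h' => h'.trans hst, fun h' => le_of_not_gt fun h'' => (this h'').not_ge h'⟩

lemma exists_pos_ecdf_sub_eq_ecdf_add {t : ℝ} (ht : ∀ i < n, x i ≠ t) :
    ∃ δ > 0, ecdf n x (t - δ) = ecdf n x (t + δ) := by
  obtain ⟨δ, hδ, hfar⟩ := ((finite_Iio n).image x).exists_pos_forall_notMem_Icc
    fun ⟨i, hi, hxi⟩ => ht i hi hxi
  exact ⟨δ, hδ, ecdf_eq_of_forall_notMem_Ioc (by linarith) fun i hi hxi =>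
    hfar _ ⟨i, hi, rfl⟩ (Ioc_subset_Icc_self hxi)⟩

lemma continuousWithinAt_ecdf (s : ℝ) : ContinuousWithinAt (ecdf n x) (Ici s) s := by
  obtain ⟨δ, hδ, hfar⟩ :=
    (((finite_Iio n).image x).inter_of_left (Ioi s)).exists_pos_forall_notMem_Icc
      fun h => lt_irrefl s h.2
  refine continuousWithinAt_const.congr_of_eventuallyEq
    (mem_of_superset (Ico_mem_nhdsGE (by linarith : s < s + δ)) fun r hr => ?_) rfl
  refine (ecdf_eq_of_forall_notMem_Ioc hr.1 fun i hi hxi => ?_).symm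
  exact hfar _ ⟨⟨i, hi, rfl⟩, hxi.1⟩ ⟨by linarith [hxi.1], by linarith [hxi.2, hr.2]⟩

lemma eventually_ecdf_eq_zero (n : ℕ) (x : ℕ → ℝ) : ∀ᶠ t in atBot, ecdf n x t = 0 := by
  obtain ⟨a, ha⟩ := ((finite_Iio n).image x).bddBelow
  exact eventually_atBot.2 ⟨a - 1, fun t ht => ecdf_eq_zero fun i hi =>
    by linarith [ha ⟨i, hi, rfl⟩]⟩

lemma eventually_ecdf_eq_one (hn : 0 < n) (x : ℕ → ℝ) : ∀ᶠ t in atTop, ecdf n x t = 1 := by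
  obtain ⟨b, hb⟩ := ((finite_Iio n).image x).bddAbove
  exact eventually_atTop.2 ⟨b, fun t ht => ecdf_eq_one hn fun i hi => (hb ⟨i, hi, rfl⟩).trans ht⟩

lemma monotone_ecdf (n : ℕ) (x : ℕ → ℝ) : Monotone (ecdf n x) := fun s t hst => by
  unfold ecdf
  gcongr with i
  split_ifs with hs ht <;> first | exact absurd (hs.trans hst) ht | norm_num

lemma isCDF_ecdf (hn : 0 < n) (x : ℕ → ℝ) : IsCDF (ecdf n x) where
  mono := monotone_ecdf n x
  rightCont := continuousWithinAt_ecdf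
  tendsto_atBot := tendsto_const_nhds.congr' ((eventually_ecdf_eq_zero n x).mono fun _ h => h.symm)
  tendsto_atTop := tendsto_const_nhds.congr' ((eventually_ecdf_eq_one hn x).mono fun _ h => h.symm)

end EmpiricalCDF

/-- For a fixed sample, `H_m(𝔽_n) → 𝔽_n` pointwise off the sample points,
and in every `L^p` norm, as `m → ∞`. -/
theorem hoeffCDF_ecdf_tendsto
    (n : ℕ) (hn : 0 < n) (x : ℕ → ℝ) :
    (∀ t : ℝ, (∀ i < n, x i ≠ t) →
      Tendsto (fun m : ℕ => hoeffCDF m (ecdf n x) t) atTop (nhds (ecdf n x t))) ∧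
    (∀ p : ℝ, 1 ≤ p →
      Tendsto (fun m : ℕ => ∫ t : ℝ, |hoeffCDF m (ecdf n x) t - ecdf n x t| ^ p)
        atTop (nhds 0)) := by
  have hF := isCDF_ecdf hn x
  obtain ⟨a, ha⟩ := (eventually_ecdf_eq_zero n x).exists
  obtain ⟨b, hb⟩ := (eventually_ecdf_eq_one hn x).exists
  have hpointwise : ∀ t : ℝ, (∀ i < n, x i ≠ t) →
      Tendsto (fun m : ℕ => hoeffCDF m (ecdf n x) t) atTop (nhds (ecdf n x t)) := fun t ht => by
    obtain ⟨δ, hδ, hflat⟩ := exists_pos_ecdf_sub_eq_ecdf_add ht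
    exact hF.tendsto_hoeffCDF_of_apply_sub_eq_apply_add ha hb hδ hflat
  refine ⟨hpointwise, fun p hp => hF.tendsto_integral_abs_hoeffCDF_sub_rpow ha hb (by linarith) ?_⟩
  filter_upwards [(countable_range x).ae_notMem volume] with t ht
  exact hpointwise t fun i _ hxi => ht ⟨i, hxi⟩
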